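/- Let 3 ≤ k ≤ n, α > 0 and N₀ > 0. There exists a constant c₀ > 0 depending only on n, k, α and N₀ such that every λ ∈ Γ_{k−1} with σ_k(λ) + α σ_{k−1}(λ) ≥ N₀ satisfies Σ_{i=1}^n S_k^{ii}(λ) = (n−k+1)σ_{k−1}(λ) + α(n−k+2)σ_{k−2}(λ) ≥ c₀ · σ₁(λ)^{1/(k−2)}. -/

import Mathlib

/-
Newton's inequality `σ_{j+1} σ_{j-1} ≤ σ_j²` holds for every real vector, so on `Γ_{k-1}` the
positive sequence `σ_0, …, σ_{k-1}` is log-concave and its ratios `σ_{j+1}/σ_j` decrease. With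
`a = σ_{k-2}` and `b = σ_{k-1}` this gives `b ≤ σ₁ a` and `σ₁ b^{k-3} ≤ a^{k-2}`, while Newton at
`j = k-1` turns `S_k ≥ N₀` into `N₀ a ≤ b (b + α a)`. Together these force
`σ₁ ≤ C (a + b)^{k-2}`, and `Σ_i S_k^{ii} = (n-k+1) b + α (n-k+2) a ≥ min(1, α) (a + b)`.
-/

open scoped BigOperators

noncomputable section

/-- The `j`-th elementary symmetric function of the entries of `lam` indexed by `T`
(`j : ℤ`, with value `0` for `j < 0`). -/
def sigmaOn {n : ℕ} (T : Finset (Fin n)) (j : ℤ) (lam : Fin n → ℝ) : ℝ :=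
  if 0 ≤ j then ∑ s ∈ T.powersetCard j.toNat, ∏ i ∈ s, lam i else 0

/-- The `j`-th elementary symmetric polynomial `σ_j(λ)`. -/
def esymmR {n : ℕ} (j : ℤ) (lam : Fin n → ℝ) : ℝ := sigmaOn Finset.univ j lam

/-- The Garding cone `Γ_k`. -/
def GammaCone (n k : ℕ) : Set (Fin n → ℝ) :=
  {lam | ∀ i : ℕ, 1 ≤ i → i ≤ k → 0 < esymmR (i : ℤ) lam}

/-- `S_j(λ) = σ_j(λ) + α σ_{j-1}(λ)`. -/
def Sfun {n : ℕ} (α : ℝ) (j : ℤ) (lam : Fin n → ℝ) : ℝ :=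
  esymmR j lam + α * esymmR (j - 1) lam

/-- The cone `Γ̃_k = Γ_{k-1} ∩ {λ : S_k(λ) > 0}`. -/
def GammaTilde (n k : ℕ) (α : ℝ) : Set (Fin n → ℝ) :=
  GammaCone n (k - 1) ∩ {lam | 0 < Sfun α (k : ℤ) lam}

/-- `S_k^{pp}(λ) = σ_{k-1}(λ|p) + α σ_{k-2}(λ|p)`, where `(λ|p)` deletes the
`p`-th entry of `λ`. -/
def SD {n : ℕ} (α : ℝ) (k : ℤ) (lam : Fin n → ℝ) (p : Fin n) : ℝ :=
  sigmaOn (Finset.univ.erase p) (k - 1) lam + α * sigmaOn (Finset.univ.erase p) (k - 2) lam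

/-- `S_k^{pp,qq}(λ) = σ_{k-2}(λ|pq) + α σ_{k-3}(λ|pq)` for `p ≠ q`, where `(λ|pq)`
deletes the `p`-th and `q`-th entries of `λ`. -/
def SDD {n : ℕ} (α : ℝ) (k : ℤ) (lam : Fin n → ℝ) (p q : Fin n) : ℝ :=
  sigmaOn ((Finset.univ.erase p).erase q) (k - 2) lam
    + α * sigmaOn ((Finset.univ.erase p).erase q) (k - 3) lam

open Finset Multiset Polynomial

namespace Finset

variable {ι : Type*}

theorem esymm_map_val_card {R : Type*} [CommSemiring R] (s : Finset ι) (f : ι → R) :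
    (s.val.map f).esymm #s = ∏ i ∈ s, f i := by
  rw [esymm_map_val, powersetCard_self, sum_singleton]

variable [DecidableEq ι]

theorem sum_esymm_erase {R : Type*} [CommSemiring R] (s : Finset ι) (f : ι → R) (m : ℕ) :
    ∑ p ∈ s, ((s.erase p).val.map f).esymm m = (#s - m) • (s.val.map f).esymm m := by
  simp only [esymm_map_val]
  rw [sum_comm' (t' := s.powersetCard m) (s' := fun t => s \ t), smul_sum]
  · refine sum_congr rfl fun t ht => ?_
    rw [sum_const, card_sdiff_of_subset (mem_powersetCard.1 ht).1, (mem_powersetCard.1 ht).2]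
  · intro p t
    simp only [mem_powersetCard, subset_erase, mem_sdiff]
    tauto

theorem esymm_map_val_card_sub_one {R : Type*} [CommSemiring R] {s : Finset ι} (hs : s.Nonempty)
    (f : ι → R) : (s.val.map f).esymm (#s - 1) = ∑ p ∈ s, ∏ i ∈ s.erase p, f i := by
  have h := sum_esymm_erase s f (#s - 1)
  rw [Nat.sub_sub_self (show 1 ≤ #s from hs.card_pos), one_smul] at h
  rw [← h]
  refine sum_congr rfl fun p hp => ?_
  rw [← card_erase_of_mem hp, esymm_map_val_card]

/- With `E_i = (s.val.map f).esymm i` and `a p = ∏_{i ≠ p} f i`, we have `E_{j+1} = ∑ a p` and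
`2 E_{j+2} E_j = (∑ a)² - ∑ a²`, so this is the Cauchy–Schwarz inequality `(∑ a)² ≤ #s ∑ a²`. -/
theorem newton_esymm_of_card_eq (s : Finset ι) (f : ι → ℝ) {j : ℕ} (hs : #s = j + 2) :
    2 * (j + 2) * ((s.val.map f).esymm (j + 2) * (s.val.map f).esymm j)
      ≤ (j + 1) * (s.val.map f).esymm (j + 1) ^ 2 := by
  set a : ι → ℝ := fun p => ∏ i ∈ s.erase p, f i
  have hne : s.Nonempty := by rw [← card_pos]; omega
  have hS : (s.val.map f).esymm (j + 1) = ∑ p ∈ s, a p := by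
    rw [← esymm_map_val_card_sub_one hne, hs]
    rfl
  have hpair : ∀ p ∈ s, a p * ∑ q ∈ s.erase p, a q
      = (∏ i ∈ s, f i) * ((s.erase p).val.map f).esymm j := by
    intro p hp
    have hcard : #(s.erase p) = j + 1 := by rw [card_erase_of_mem hp, hs]; rfl
    rw [show j = #(s.erase p) - 1 by omega, esymm_map_val_card_sub_one (by rw [← card_pos]; omega),
      mul_sum, mul_sum]
    refine sum_congr rfl fun q hq => ?_
    have hpq : p ∈ s.erase q := mem_erase.2 ⟨(ne_of_mem_erase hq).symm, hp⟩
    show (∏ i ∈ s.erase p, f i) * (∏ i ∈ s.erase q, f i) = _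
    rw [← mul_prod_erase (s.erase q) f hpq, erase_right_comm, ← prod_erase_mul s f hp]
    ring
  have hsum : 2 * ((s.val.map f).esymm (j + 2) * (s.val.map f).esymm j)
      = (∑ p ∈ s, a p) ^ 2 - ∑ p ∈ s, a p ^ 2 := by
    have h := sum_esymm_erase s f j
    rw [hs, show j + 2 - j = 2 by omega] at h
    have hP : (s.val.map f).esymm (j + 2) = ∏ i ∈ s, f i := by rw [← hs, esymm_map_val_card]
    rw [hP]
    calc 2 * ((∏ i ∈ s, f i) * (s.val.map f).esymm j)
        = ∑ p ∈ s, (∏ i ∈ s, f i) * ((s.erase p).val.map f).esymm j := by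
          rw [← mul_sum, h, nsmul_eq_mul]; push_cast; ring
      _ = ∑ p ∈ s, a p * ((∑ q ∈ s, a q) - a p) :=
          sum_congr rfl fun p hp => by rw [← hpair p hp, sum_erase_eq_sub hp]
      _ = (∑ p ∈ s, a p) ^ 2 - ∑ p ∈ s, a p ^ 2 := by
          simp only [mul_sub, sum_sub_distrib, ← sum_mul, sq]
  have hCS : (∑ p ∈ s, a p) ^ 2 ≤ (j + 2) * ∑ p ∈ s, a p ^ 2 := by
    have h := sq_sum_le_card_mul_sum_sq (s := s) (f := a)
    rw [hs] at h
    exact_mod_cast h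
  rw [hS]
  nlinarith

end Finset

namespace Multiset

theorem esymm_eq_zero_of_card_lt {R : Type*} [CommSemiring R] {s : Multiset R} {j : ℕ}
    (h : card s < j) : s.esymm j = 0 := by
  simp [esymm, powersetCard_eq_empty _ h]

/-- Rolle: `t` is the multiset of roots of the derivative of `∏ (X - a)`, `a ∈ s`. -/
theorem exists_esymm_derivative (s : Multiset ℝ) :
    ∃ t : Multiset ℝ, card t = card s - 1 ∧
      ∀ j ≤ card t, (card s : ℝ) * t.esymm j = (card s - j) * s.esymm j := by
  set n := card s
  set p : ℝ[X] := (s.map fun a => X - C a).prod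
  have hp : p.natDegree = n := natDegree_multiset_prod_X_sub_C_eq_card s
  have hdeg : (derivative p).natDegree = n - 1 := by rw [natDegree_derivative, hp]
  have hroots : card (derivative p).roots = (derivative p).natDegree := by
    refine le_antisymm (card_roots' _) ?_
    have := card_roots_le_derivative p
    rw [roots_multiset_prod_X_sub_C] at this
    omega
  refine ⟨(derivative p).roots, by rw [hroots, hdeg], fun j hj => ?_⟩
  rw [hroots, hdeg] at hj
  rcases Nat.eq_zero_or_pos n with hn | hn
  · simp [hn, show j = 0 by omega]
  -- compare the coefficients of `p'` computed from those of `p` and, by Vieta, from its roots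
  have hcoeff : ∀ i ≤ n - 1, (derivative p).coeff (n - 1 - i)
      = (-1) ^ i * s.esymm i * (n - i) := by
    intro i hi
    rw [coeff_derivative, prod_X_sub_C_coeff s (by omega), show n - (n - 1 - i + 1) = i by omega]
    push_cast [show i ≤ n - 1 from hi, show 1 ≤ n from hn]
    ring
  have hlead : (derivative p).leadingCoeff = n := by
    rw [leadingCoeff, hdeg, ← Nat.sub_zero (n - 1), hcoeff 0 (Nat.zero_le _)]
    simp [esymm]
  have hvieta := coeff_eq_esymm_roots_of_card hroots (k := n - 1 - j) (by omega)
  rw [hcoeff j hj, hlead, hdeg, Nat.sub_sub_self hj] at hvieta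
  have hsign : ((-1 : ℝ) ^ j) ≠ 0 := pow_ne_zero _ (by norm_num)
  apply mul_left_cancel₀ hsign
  linear_combination -hvieta

/- Newton's inequality `E_{j+2} E_j / (C(n,j+2) C(n,j)) ≤ (E_{j+1} / C(n,j+1))²` for
`E_i = s.esymm i`, `n = card s`, with the binomial coefficients cleared. Passing to the roots of
the derivative lowers `card s` and preserves the inequality, down to the case `card s = j + 2`. -/
theorem newton_esymm (s : Multiset ℝ) (j : ℕ) :
    (j + 2) * (card s - j) * (s.esymm (j + 2) * s.esymm j)
      ≤ (j + 1) * (card s - j - 1) * s.esymm (j + 1) ^ 2 := by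
  generalize hn : card s = n
  induction n using Nat.strong_induction_on generalizing s with
  | _ n ih =>
    rcases lt_trichotomy n (j + 2) with hlt | rfl | hgt
    · rw [esymm_eq_zero_of_card_lt (hn ▸ hlt)]
      rcases Nat.lt_or_ge n (j + 1) with hlt' | hge
      · simp [esymm_eq_zero_of_card_lt (hn ▸ hlt')]
      · obtain rfl : n = j + 1 := by omega
        norm_num
    · classical
      have h := Finset.newton_esymm_of_card_eq (Finset.univ : Finset s) (fun x => (x : ℝ))
        (j := j) (by rw [Finset.card_univ, card_coe, hn])
      rw [map_univ_coe] at h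
      push_cast
      linarith
    · obtain ⟨t, ht, hts⟩ := exists_esymm_derivative s
      rw [hn] at ht hts
      have h := ih (n - 1) (by omega) t ht
      push_cast [show 1 ≤ n by omega] at h
      have h0 := hts j (by omega)
      have h1 := hts (j + 1) (by omega)
      have h2 := hts (j + 2) (by omega)
      push_cast at h1 h2
      have hc : (0 : ℝ) < (n - j - 1) * (n - j - 2) := by
        have : (j : ℝ) + 2 < n := by exact_mod_cast hgt
        nlinarith
      refine le_of_mul_le_mul_left ?_ hc
      calc (n - j - 1) * (n - j - 2) * ((j + 2) * (n - j) * (s.esymm (j + 2) * s.esymm j))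
          = n ^ 2 * ((j + 2) * (n - 1 - j) * (t.esymm (j + 2) * t.esymm j)) := by
            linear_combination (-(j + 2) * (n - 1 - j) : ℝ)
              * ((n * t.esymm j) * h2 + ((n - j - 2) * s.esymm (j + 2)) * h0)
        _ ≤ n ^ 2 * ((j + 1) * (n - 1 - j - 1) * t.esymm (j + 1) ^ 2) := by gcongr
        _ = (n - j - 1) * (n - j - 2) * ((j + 1) * (n - j - 1) * s.esymm (j + 1) ^ 2) := by
            linear_combination ((j + 1) * (n - 1 - j - 1) : ℝ)
              * ((n * t.esymm (j + 1) + (n - j - 1) * s.esymm (j + 1)) * h1)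

theorem esymm_add_two_mul_esymm_le_sq (s : Multiset ℝ) (j : ℕ) :
    s.esymm (j + 2) * s.esymm j ≤ s.esymm (j + 1) ^ 2 := by
  rcases Nat.lt_or_ge (card s) (j + 2) with hlt | hge
  · rw [esymm_eq_zero_of_card_lt hlt, zero_mul]
    positivity
  · have hN := newton_esymm s j
    have hn : (j : ℝ) + 2 ≤ card s := by exact_mod_cast hge
    have hc : (0 : ℝ) < (j + 1) * (card s - j - 1) := by nlinarith
    rcases le_or_gt 0 (s.esymm (j + 2) * s.esymm j) with hP | hP
    · refine le_of_mul_le_mul_left ?_ hc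
      calc (j + 1) * (card s - j - 1) * (s.esymm (j + 2) * s.esymm j)
          ≤ (j + 2) * (card s - j) * (s.esymm (j + 2) * s.esymm j) :=
            mul_le_mul_of_nonneg_right (by nlinarith) hP
        _ ≤ _ := hN
    · exact hP.le.trans (sq_nonneg _)

end Multiset

theorem succ_mul_le_mul_succ_of_logConcave {e : ℕ → ℝ} {m : ℕ} (hpos : ∀ i ≤ m, 0 < e i)
    (hlc : ∀ i, i + 2 ≤ m → e (i + 2) * e i ≤ e (i + 1) ^ 2) {i j : ℕ} (hij : i ≤ j)
    (hj : j + 1 ≤ m) : e (j + 1) * e i ≤ e (i + 1) * e j := by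
  induction j, hij using Nat.le_induction with
  | base => rw [mul_comm]
  | succ j hij ih =>
    refine le_of_mul_le_mul_right ?_ (hpos j (by omega))
    calc e (j + 1 + 1) * e i * e j = (e (j + 2) * e j) * e i := by ring
      _ ≤ e (j + 1) ^ 2 * e i := mul_le_mul_of_nonneg_right (hlc j hj) (hpos i (by omega)).le
      _ = e (j + 1) * (e (j + 1) * e i) := by ring
      _ ≤ e (j + 1) * (e (i + 1) * e j) :=
          mul_le_mul_of_nonneg_left (ih (by omega)) (hpos _ (by omega)).le
      _ = e (i + 1) * e (j + 1) * e j := by ring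

theorem one_mul_pow_le_of_logConcave {e : ℕ → ℝ} {m : ℕ} (hpos : ∀ i ≤ m + 1, 0 < e i)
    (hlc : ∀ i, i + 2 ≤ m + 1 → e (i + 2) * e i ≤ e (i + 1) ^ 2) {i : ℕ} (hi : i ≤ m) :
    e 1 * e (m + 1) ^ i ≤ e (i + 1) * e m ^ i := by
  induction i with
  | zero => simp
  | succ i ih =>
    have hstep := succ_mul_le_mul_succ_of_logConcave hpos hlc (i := i + 1) (j := m) hi le_rfl
    calc e 1 * e (m + 1) ^ (i + 1) = (e 1 * e (m + 1) ^ i) * e (m + 1) := by ring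
      _ ≤ (e (i + 1) * e m ^ i) * e (m + 1) :=
          mul_le_mul_of_nonneg_right (ih (by omega)) (hpos _ le_rfl).le
      _ = e m ^ i * (e (m + 1) * e (i + 1)) := by ring
      _ ≤ e m ^ i * (e (i + 1 + 1) * e m) :=
          mul_le_mul_of_nonneg_left hstep (pow_nonneg (hpos m (by omega)).le _)
      _ = e (i + 1 + 1) * e m ^ (i + 1) := by ring

theorem min_one_div_le_of_le_mul_add {N α s : ℝ} (hs : 0 ≤ s) (hα : 0 ≤ α)
    (h : N ≤ s * (s + α)) : min 1 (N / (1 + α)) ≤ s := by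
  rcases le_total s 1 with hs1 | hs1
  · refine min_le_of_right_le (div_le_of_le_mul₀ (by linarith) hs ?_)
    nlinarith
  · exact min_le_of_left_le hs1

theorem mul_min_pow_le_add_pow {a b e₁ N α : ℝ} (m : ℕ) (ha : 0 < a) (hb : 0 < b)
    (hN : 0 ≤ N) (hα : 0 ≤ α) (h₁ : b ≤ e₁ * a) (h₂ : e₁ * b ^ m ≤ a ^ (m + 1))
    (h₃ : N * a ≤ b * (b + α * a)) :
    e₁ * min 1 (N / (1 + α)) ^ m ≤ (a + b) ^ (m + 1) := by
  have he₁ : 0 < e₁ := pos_of_mul_pos_left (hb.trans_le h₁) ha.le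
  have hδ : 0 ≤ min 1 (N / (1 + α)) := le_min zero_le_one (by positivity)
  suffices ∃ x, min 1 (N / (1 + α)) ≤ x ∧ e₁ * x ^ m ≤ (a + b) ^ (m + 1) by
    obtain ⟨x, hx, hx'⟩ := this
    exact le_trans (by gcongr) hx'
  -- for `b ≤ a`, `h₃` bounds `b` below; for `a ≤ b`, `e₁ ≤ a` and `h₃` bounds `a + b` below
  rcases le_total b a with hba | hab
  · refine ⟨b, min_le_of_right_le (div_le_of_le_mul₀ (by linarith) hb.le ?_), ?_⟩
    · refine le_of_mul_le_mul_right ?_ ha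
      nlinarith
    · exact h₂.trans (by gcongr; linarith)
  · have hea : e₁ ≤ a := by
      refine le_of_mul_le_mul_right ?_ (pow_pos hb m)
      calc e₁ * b ^ m ≤ a * a ^ m := by rw [← pow_succ']; exact h₂
        _ ≤ a * b ^ m := by gcongr
    refine ⟨a + b, min_one_div_le_of_le_mul_add (by positivity) hα ?_, ?_⟩
    · have hba : b ≤ a * a := h₁.trans (mul_le_mul_of_nonneg_right hea ha.le)
      have hb' : b * (b + α * a) ≤ b * (a + α) * a := by nlinarith
      refine le_of_mul_le_mul_right (h₃.trans (hb'.trans ?_)) ha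
      gcongr <;> linarith
    · calc e₁ * (a + b) ^ m ≤ (a + b) * (a + b) ^ m := by gcongr; linarith
        _ = (a + b) ^ (m + 1) := by ring

theorem sigmaOn_natCast {n : ℕ} (T : Finset (Fin n)) (j : ℕ) (lam : Fin n → ℝ) :
    sigmaOn T j lam = (T.val.map lam).esymm j := by
  rw [sigmaOn, if_pos (Int.natCast_nonneg j), Int.toNat_natCast, Finset.esymm_map_val]

theorem esymmR_natCast {n : ℕ} (j : ℕ) (lam : Fin n → ℝ) :
    esymmR j lam = (Finset.univ.val.map lam).esymm j :=
  sigmaOn_natCast _ _ _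

theorem sum_SD_eq {n k : ℕ} (α : ℝ) (lam : Fin n → ℝ) (hk : 2 ≤ k) (hkn : k ≤ n) :
    ∑ i, SD α (k : ℤ) lam i
      = ((n - k + 1 : ℕ) : ℝ) * esymmR ((k : ℤ) - 1) lam
        + α * ((n - k + 2 : ℕ) : ℝ) * esymmR ((k : ℤ) - 2) lam := by
  have h₁ : (k : ℤ) - 1 = ((k - 1 : ℕ) : ℤ) := by omega
  have h₂ : (k : ℤ) - 2 = ((k - 2 : ℕ) : ℤ) := by omega
  simp only [SD, h₁, h₂, esymmR_natCast, sigmaOn_natCast, Finset.sum_add_distrib,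
    ← Finset.mul_sum, Finset.sum_esymm_erase, Finset.card_univ, Fintype.card_fin, nsmul_eq_mul,
    show n - (k - 1) = n - k + 1 by omega, show n - (k - 2) = n - k + 2 by omega]
  ring

theorem min_mul_add_le_sum_SD {n k : ℕ} {α : ℝ} {lam : Fin n → ℝ} (hk : 2 ≤ k) (hkn : k ≤ n)
    (hα : 0 ≤ α) (ha : 0 ≤ esymmR ((k : ℤ) - 2) lam) (hb : 0 ≤ esymmR ((k : ℤ) - 1) lam) :
    min 1 α * (esymmR ((k : ℤ) - 2) lam + esymmR ((k : ℤ) - 1) lam) ≤ ∑ i, SD α (k : ℤ) lam i := by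
  have hc₁ : (1 : ℝ) ≤ ((n - k + 1 : ℕ) : ℝ) := by exact_mod_cast Nat.le_add_left 1 _
  have hc₂ : (1 : ℝ) ≤ ((n - k + 2 : ℕ) : ℝ) := by exact_mod_cast (by omega)
  rw [sum_SD_eq α lam hk hkn]
  nlinarith [mul_le_mul_of_nonneg_right (min_le_left 1 α) hb,
    mul_le_mul_of_nonneg_right (min_le_right 1 α) ha,
    mul_le_mul_of_nonneg_right hc₁ hb, mul_le_mul_of_nonneg_right hc₂ (mul_nonneg hα ha)]

theorem esymmR_one_mul_min_pow_le {n m : ℕ} {α N₀ : ℝ} (hα : 0 ≤ α) (hN₀ : 0 ≤ N₀)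
    {lam : Fin n → ℝ} (hlam : lam ∈ GammaCone n (m + 2)) (hS : N₀ ≤ Sfun α (m + 3 : ℕ) lam) :
    esymmR 1 lam * min 1 (N₀ / (1 + α)) ^ m
      ≤ (esymmR (m + 1 : ℕ) lam + esymmR (m + 2 : ℕ) lam) ^ (m + 1) := by
  set E : ℕ → ℝ := fun j => (Finset.univ.val.map lam).esymm j with hE
  have hE₀ : E 0 = 1 := by simp [hE, Multiset.esymm]
  have hpos : ∀ i ≤ m + 2, 0 < E i := by
    intro i hi
    rcases Nat.eq_zero_or_pos i with rfl | hi₀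
    · rw [hE₀]
      exact one_pos
    · simpa only [esymmR_natCast] using hlam i hi₀ hi
  have hlc : ∀ i, E (i + 2) * E i ≤ E (i + 1) ^ 2 := fun i =>
    Multiset.esymm_add_two_mul_esymm_le_sq _ i
  have hSk : Sfun α (m + 3 : ℕ) lam = E (m + 3) + α * E (m + 2) := by
    rw [Sfun, show ((m + 3 : ℕ) : ℤ) - 1 = ((m + 2 : ℕ) : ℤ) by push_cast; ring,
      esymmR_natCast, esymmR_natCast]
  have h₁ := succ_mul_le_mul_succ_of_logConcave hpos (fun i _ => hlc i) (i := 0) (j := m + 1)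
    (Nat.zero_le _) le_rfl
  have h₂ := one_mul_pow_le_of_logConcave (m := m + 1) hpos (fun i _ => hlc i) (Nat.le_succ m)
  rw [show esymmR 1 lam = E 1 by exact_mod_cast esymmR_natCast 1 lam, esymmR_natCast,
    esymmR_natCast]
  refine mul_min_pow_le_add_pow m (hpos _ (by omega)) (hpos _ le_rfl) hN₀ hα ?_ ?_ ?_
  · rwa [hE₀, mul_one] at h₁
  · rwa [← pow_succ'] at h₂
  · have := hlc (m + 1)
    have ha := hpos (m + 1) (by omega)
    rw [hSk] at hS
    nlinarith

/-- **Lower bound for `Σ_i S_k^{ii}`** (Lemma 2.5 (c)): for `3 ≤ k ≤ n` there is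
`c₀ > 0` (depending on `n, k, α, N₀`) such that every `λ ∈ Γ_{k-1}` with
`σ_k(λ) + α σ_{k-1}(λ) ≥ N₀` satisfies
`Σ_i S_k^{ii}(λ) = (n-k+1)σ_{k-1}(λ) + α(n-k+2)σ_{k-2}(λ) ≥ c₀ σ₁(λ)^{1/(k-2)}`. -/
theorem sum_SkD_lower_bound
    {n k : ℕ} (hk : 3 ≤ k) (hkn : k ≤ n) (α N₀ : ℝ) (hα : 0 < α) (hN₀ : 0 < N₀) :
    ∃ c₀ : ℝ, 0 < c₀ ∧
      ∀ lam ∈ GammaCone n (k - 1),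
        N₀ ≤ Sfun α (k : ℤ) lam →
        (∑ i, SD α (k : ℤ) lam i)
            = ((n - k + 1 : ℕ) : ℝ) * esymmR ((k : ℤ) - 1) lam
              + α * ((n - k + 2 : ℕ) : ℝ) * esymmR ((k : ℤ) - 2) lam ∧
        c₀ * (esymmR 1 lam) ^ ((1 : ℝ) / ((k : ℝ) - 2)) ≤ ∑ i, SD α (k : ℤ) lam i := by
  obtain ⟨m, rfl⟩ : ∃ m, k = m + 3 := ⟨k - 3, by omega⟩
  set δ := min 1 (N₀ / (1 + α))
  have hδ : 0 < δ := lt_min one_pos (by positivity)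
  have hexp : (1 : ℝ) / (((m + 3 : ℕ) : ℝ) - 2) = ((m + 1 : ℕ) : ℝ)⁻¹ := by push_cast; ring
  refine ⟨min 1 α * (δ ^ m) ^ ((m + 1 : ℕ) : ℝ)⁻¹, by positivity,
    fun lam hlam hS => ⟨sum_SD_eq α lam (by omega) hkn, ?_⟩⟩
  have hσ₁ : 0 < esymmR 1 lam := by exact_mod_cast hlam 1 le_rfl (by omega)
  have ha : 0 < esymmR (m + 1 : ℕ) lam := hlam (m + 1) (by omega) (by omega)
  have hb : 0 < esymmR (m + 2 : ℕ) lam := hlam (m + 2) (by omega) le_rfl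
  have hk₁ : ((m + 3 : ℕ) : ℤ) - 1 = ((m + 2 : ℕ) : ℤ) := by push_cast; ring
  have hk₂ : ((m + 3 : ℕ) : ℤ) - 2 = ((m + 1 : ℕ) : ℤ) := by push_cast; ring
  have hsum := min_mul_add_le_sum_SD (lam := lam) (by omega) hkn hα.le
    (by rw [hk₂]; exact ha.le) (by rw [hk₁]; exact hb.le)
  rw [hk₁, hk₂] at hsum
  calc min 1 α * (δ ^ m) ^ ((m + 1 : ℕ) : ℝ)⁻¹ * esymmR 1 lam ^ (1 / (((m + 3 : ℕ) : ℝ) - 2))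
      = min 1 α * (esymmR 1 lam * δ ^ m) ^ ((m + 1 : ℕ) : ℝ)⁻¹ := by
        rw [hexp, mul_assoc, ← Real.mul_rpow (by positivity) hσ₁.le, mul_comm (δ ^ m)]
    _ ≤ min 1 α * ((esymmR (m + 1 : ℕ) lam + esymmR (m + 2 : ℕ) lam) ^ (m + 1))
          ^ ((m + 1 : ℕ) : ℝ)⁻¹ := by
        gcongr
        exact esymmR_one_mul_min_pow_le hα.le hN₀.le hlam hS
    _ = min 1 α * (esymmR (m + 1 : ℕ) lam + esymmR (m + 2 : ℕ) lam) := by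
        rw [Real.pow_rpow_inv_natCast (by positivity) (by omega)]
    _ ≤ _ := hsum
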